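/- arXiv:1701.07536 — 3 statements merged into one kernel-verified Lean document; each statement's English description precedes it below -/
import Mathlib

section
/- Let m ≥ 2 and n ≥ 1. Suppose A ∈ ℝ^{[m,n]} is a nonsingular M-tensor and b ∈ ℝⁿ is a positive vector. Let x : [0,1] → ℝⁿ be a continuous map with x(0) = (b₁^{1/(m-1)}, …, b_n^{1/(m-1)})ᵀ such that for every t ∈ [0,1], x(t) is positive and (t A + (1−t) I) x(t)^{m-1} = b. Then x(1) is the unique positive solution of A x^{m-1} = b; that is, A x(1)^{m-1} = b, and every positive vector y with A y^{m-1} = b equals x(1). -/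
/-!
We model an `m`-th order, `n`-dimensional real tensor with `m = k + 2` (so `m ≥ 2`)
as a map `Fin n → (Fin (k+1) → Fin n) → ℝ`: the first index, followed by the
`m - 1 = k + 1` trailing indices.
-/

noncomputable section

/-- The vector `A x^{m-1}`. -/
def tvec (n k : ℕ) (A : Fin n → (Fin (k + 1) → Fin n) → ℝ) (x : Fin n → ℝ) :
    Fin n → ℝ :=
  fun i => ∑ g : Fin (k + 1) → Fin n, A i g * ∏ j, x (g j)

/-- The `n × n` matrix `A x^{m-2}`, with `(i,j)` entry
`∑_{i₃,…,i_m} A_{i j i₃ ⋯ i_m} x_{i₃} ⋯ x_{i_m}`. -/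
def tmat (n k : ℕ) (A : Fin n → (Fin (k + 1) → Fin n) → ℝ) (x : Fin n → ℝ) :
    Matrix (Fin n) (Fin n) ℝ :=
  fun i j => ∑ h : Fin k → Fin n, A i (Fin.cons j h) * ∏ l, x (h l)

/-- The identity tensor `I`: entries `1` when all indices coincide, `0` otherwise. -/
def idT (n k : ℕ) : Fin n → (Fin (k + 1) → Fin n) → ℝ :=
  fun i g => if ∀ j, g j = i then 1 else 0

/-- `lam ∈ ℂ` is an eigenvalue of the tensor `B`: `B x^{m-1} = lam * x^{[m-1]}` for some
nonzero complex vector `x`. -/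
def IsEig (n k : ℕ) (B : Fin n → (Fin (k + 1) → Fin n) → ℝ) (lam : ℂ) : Prop :=
  ∃ x : Fin n → ℂ, x ≠ 0 ∧
    ∀ i, ∑ g : Fin (k + 1) → Fin n, (B i g : ℂ) * ∏ j, x (g j) = lam * (x i) ^ (k + 1)

/-- The spectral radius of a tensor: supremum of moduli of its eigenvalues. -/
def specRad (n k : ℕ) (B : Fin n → (Fin (k + 1) → Fin n) → ℝ) : ℝ :=
  sSup {r : ℝ | ∃ lam : ℂ, IsEig n k B lam ∧ r = ‖lam‖}

/-- A tensor is nonnegative if all its entries are nonnegative. -/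
def NonnegT (n k : ℕ) (B : Fin n → (Fin (k + 1) → Fin n) → ℝ) : Prop :=
  ∀ i g, 0 ≤ B i g

/-- `A` is a nonsingular M-tensor: `A = s I - B` with `B` nonnegative and `s > ρ(B)`. -/
def IsNsMTensor (n k : ℕ) (A : Fin n → (Fin (k + 1) → Fin n) → ℝ) : Prop :=
  ∃ s : ℝ, ∃ B : Fin n → (Fin (k + 1) → Fin n) → ℝ,
    NonnegT n k B ∧ specRad n k B < s ∧
    A = fun i g => s * idT n k i g - B i g

/-- The partial symmetrization `Â` of `A` over the trailing `m - 1` indices. -/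
def psym (n k : ℕ) (A : Fin n → (Fin (k + 1) → Fin n) → ℝ) :
    Fin n → (Fin (k + 1) → Fin n) → ℝ :=
  fun i g => (1 / (Nat.factorial (k + 1) : ℝ)) *
    ∑ π : Equiv.Perm (Fin (k + 1)), A i (g ∘ π)

end

/-!
Write `A = sI - B` with `B ≥ 0`. For positive `u, v` let `τ = maxᵢ uᵢ / vᵢ`, attained at `i₀`.
Since `u ≤ τ v` and `B` is nonnegative and homogeneous of degree `m - 1`,
`(A u^{m-1})_{i₀} ≥ τ^{m-1} (A v^{m-1})_{i₀}`; so `A u^{m-1} ≤ A v^{m-1}` with the right side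
positive forces `τ ≤ 1`, i.e. `u ≤ v`. Applied in both directions to two positive solutions of
`A x^{m-1} = b`, this gives uniqueness.
-/

section

variable {n k : ℕ}

lemma tvec_idT (u : Fin n → ℝ) (i : Fin n) : tvec n k (idT n k) u i = u i ^ (k + 1) := by
  simp [tvec, idT, ← funext_iff, Finset.sum_ite_eq']

lemma tvec_smul_idT_sub (s : ℝ) (B : Fin n → (Fin (k + 1) → Fin n) → ℝ) (u : Fin n → ℝ)
    (i : Fin n) :
    tvec n k (fun i g => s * idT n k i g - B i g) u i = s * u i ^ (k + 1) - tvec n k B u i := by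
  rw [← tvec_idT u i]
  simp only [tvec, Finset.mul_sum, ← Finset.sum_sub_distrib]
  exact Finset.sum_congr rfl fun g _ => by ring

lemma tvec_le_pow_mul_tvec {B : Fin n → (Fin (k + 1) → Fin n) → ℝ} (hB : NonnegT n k B)
    {u v : Fin n → ℝ} {τ : ℝ} (hu : ∀ i, 0 ≤ u i) (huv : ∀ i, u i ≤ τ * v i) (i : Fin n) :
    tvec n k B u i ≤ τ ^ (k + 1) * tvec n k B v i := by
  rw [tvec, tvec, Finset.mul_sum]
  refine Finset.sum_le_sum fun g _ => ?_
  calc B i g * ∏ j, u (g j) ≤ B i g * ∏ j, τ * v (g j) :=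
        mul_le_mul_of_nonneg_left
          (Finset.prod_le_prod (fun j _ => hu _) fun j _ => huv _) (hB i g)
    _ = τ ^ (k + 1) * (B i g * ∏ j, v (g j)) := by
        rw [Finset.prod_mul_distrib, Fin.prod_const]; ring

lemma le_of_tvec_smul_idT_sub_le {s : ℝ} {B : Fin n → (Fin (k + 1) → Fin n) → ℝ}
    (hB : NonnegT n k B) {u v : Fin n → ℝ} (hu : ∀ i, 0 < u i) (hv : ∀ i, 0 < v i)
    (hAv : ∀ i, 0 < tvec n k (fun i g => s * idT n k i g - B i g) v i)
    (hAuv : ∀ i, tvec n k (fun i g => s * idT n k i g - B i g) u i ≤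
      tvec n k (fun i g => s * idT n k i g - B i g) v i) (i : Fin n) :
    u i ≤ v i := by
  have : Nonempty (Fin n) := ⟨i⟩
  obtain ⟨i₀, hi₀⟩ := Finite.exists_max fun j => u j / v j
  set τ := u i₀ / v i₀
  have hτ : 0 < τ := div_pos (hu i₀) (hv i₀)
  have huv : ∀ j, u j ≤ τ * v j := fun j => (div_le_iff₀ (hv j)).1 (hi₀ j)
  have hu₀ : u i₀ = τ * v i₀ := (div_mul_cancel₀ _ (hv i₀).ne').symm
  have hτpow : τ ^ (k + 1) ≤ 1 := by
    have hB₀ := tvec_le_pow_mul_tvec hB (fun j => (hu j).le) huv i₀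
    have hAu₀ := hAuv i₀
    have hAv₀ := hAv i₀
    rw [tvec_smul_idT_sub, hu₀, mul_pow] at hAu₀
    rw [tvec_smul_idT_sub] at hAu₀ hAv₀
    refine le_of_mul_le_mul_right ?_ hAv₀
    linear_combination hAu₀ + hB₀
  have hτ1 : τ ≤ 1 := (pow_le_one_iff_of_nonneg hτ.le k.succ_ne_zero).1 hτpow
  calc u i ≤ τ * v i := huv i
    _ ≤ v i := mul_le_of_le_one_left (hv i).le hτ1

end

theorem homotopy_endpoint_is_unique_solution_general (k n : ℕ)
    (A : Fin n → (Fin (k + 1) → Fin n) → ℝ) (hA : IsNsMTensor n k A)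
    (b : Fin n → ℝ) (hb : ∀ i, 0 < b i)
    (x : ℝ → (Fin n → ℝ))
    (hx : ∀ t ∈ Set.Icc (0 : ℝ) 1, (∀ i, 0 < x t i) ∧
      tvec n k (fun i g => t * A i g + (1 - t) * idT n k i g) (x t) = b) :
    tvec n k A (x 1) = b ∧
      ∀ y : Fin n → ℝ, (∀ i, 0 < y i) → tvec n k A y = b → y = x 1 := by
  obtain ⟨s, B, hB, -, rfl⟩ := hA
  obtain ⟨hx1pos, hx1⟩ := hx 1 (Set.right_mem_Icc.2 zero_le_one)
  simp only [one_mul, sub_self, zero_mul, add_zero] at hx1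
  refine ⟨hx1, fun y hy hyA => ?_⟩
  have hsame : tvec n k (fun i g => s * idT n k i g - B i g) y = tvec n k _ (x 1) :=
    hyA.trans hx1.symm
  funext i
  exact le_antisymm
    (le_of_tvec_smul_idT_sub_le hB hy hx1pos (by rw [hx1]; exact hb)
      (fun j => (congrFun hsame j).le) i)
    (le_of_tvec_smul_idT_sub_le hB hx1pos hy (by rw [hyA]; exact hb)
      (fun j => (congrFun hsame j).ge) i)

/-- If `x : [0,1] → ℝⁿ` is a continuous path of positive solutions of the
homotopy, starting at `x(0) = b^{[1/(m-1)]}`, then `x(1)` is the unique positive solution of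
`A x^{m-1} = b`. -/
theorem homotopy_endpoint_is_unique_solution (k n : ℕ) (hn : 1 ≤ n)
    (A : Fin n → (Fin (k + 1) → Fin n) → ℝ) (hA : IsNsMTensor n k A)
    (b : Fin n → ℝ) (hb : ∀ i, 0 < b i)
    (x : ℝ → (Fin n → ℝ))
    (hcont : ContinuousOn x (Set.Icc (0 : ℝ) 1))
    (hx0 : x 0 = fun i => (b i) ^ (((k : ℝ) + 1)⁻¹))
    (hx : ∀ t ∈ Set.Icc (0 : ℝ) 1, (∀ i, 0 < x t i) ∧
      tvec n k (fun i g => t * A i g + (1 - t) * idT n k i g) (x t) = b) :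
    tvec n k A (x 1) = b ∧
      ∀ y : Fin n → ℝ, (∀ i, 0 < y i) → tvec n k A y = b → y = x 1 :=
  homotopy_endpoint_is_unique_solution_general k n A hA b hb x hx
end

section
/- Let m ≥ 2 and n ≥ 1. Suppose A ∈ ℝ^{[m,n]} is a nonsingular M-tensor, x ∈ ℝⁿ is a positive vector, and the vector A x^{m-1} is positive. Then the n×n matrix Â x^{m-2} is nonsingular (invertible), where Â is the partial symmetrization of A. -/
/-!
The matrix `M = Â x^{m-2}` satisfies `M x = Â x^{m-1} = A x^{m-1}`, because the symmetrization
does not change the homogeneous polynomial map `x ↦ A x^{m-1}`, and its off-diagonal entries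
are nonpositive, because every entry of the M-tensor `A` off the diagonal is. A matrix with
nonpositive off-diagonal entries mapping a nonnegative vector `x` to a positive one is
invertible: `M * diag x` is strictly diagonally dominant.
-/

open Finset Matrix

namespace Matrix

theorem isUnit_of_offDiag_nonpos_of_mulVec_pos {ι : Type*} [Fintype ι] [DecidableEq ι]
    {M : Matrix ι ι ℝ} {x : ι → ℝ} (hM : ∀ i j, i ≠ j → M i j ≤ 0) (hx : 0 ≤ x)
    (hMx : ∀ i, 0 < (M *ᵥ x) i) : IsUnit M := by
  set N := M * diagonal x
  have hN : ∀ i j, N i j = M i j * x j := fun i j => mul_diagonal ..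
  have hdom : ∀ i, ∑ j ∈ univ.erase i, ‖N i j‖ < ‖N i i‖ := by
    intro i
    calc ∑ j ∈ univ.erase i, ‖N i j‖ = -∑ j ∈ univ.erase i, M i j * x j := by
          rw [← sum_neg_distrib]
          refine sum_congr rfl fun j hj => ?_
          rw [hN, Real.norm_eq_abs, abs_of_nonpos
            (mul_nonpos_of_nonpos_of_nonneg (hM i j (ne_of_mem_erase hj).symm) (hx j))]
      _ = M i i * x i - (M *ᵥ x) i := by
          rw [sum_erase_eq_sub (mem_univ i), mulVec, dotProduct]; ring
      _ < M i i * x i := by linarith [hMx i]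
      _ ≤ ‖N i i‖ := by rw [hN, Real.norm_eq_abs]; exact le_abs_self _
  have hNunit : IsUnit N := (isUnit_iff_isUnit_det N).2 (det_ne_zero_of_sum_row_lt_diag hdom).isUnit
  exact isUnit_of_mul_isUnit_left hNunit

end Matrix

section

def IsZTensor (n k : ℕ) (A : Fin n → (Fin (k + 1) → Fin n) → ℝ) : Prop :=
  ∀ i g, (¬ ∀ j, g j = i) → A i g ≤ 0

variable {n k : ℕ} {A : Fin n → (Fin (k + 1) → Fin n) → ℝ} {x : Fin n → ℝ}

theorem IsNsMTensor.isZTensor (hA : IsNsMTensor n k A) : IsZTensor n k A := by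
  obtain ⟨s, B, hB, -, rfl⟩ := hA
  intro i g hg
  simp only [idT, if_neg hg, mul_zero, zero_sub, neg_nonpos]
  exact hB i g

theorem IsZTensor.psym (hA : IsZTensor n k A) : IsZTensor n k (psym n k A) := by
  intro i g hg
  refine mul_nonpos_of_nonneg_of_nonpos (by positivity) (sum_nonpos fun π _ => hA i _ ?_)
  exact fun h => hg fun j => by simpa using h (π.symm j)

theorem IsZTensor.tmat_nonpos (hA : IsZTensor n k A) (hx : 0 ≤ x) {i j : Fin n} (hij : i ≠ j) :
    tmat n k A x i j ≤ 0 :=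
  sum_nonpos fun h _ => mul_nonpos_of_nonpos_of_nonneg
    (hA i _ fun hall => hij (hall 0).symm) (prod_nonneg fun l _ => hx (h l))

theorem sum_comp_perm_mul_prod (F : (Fin (k + 1) → Fin n) → ℝ) (π : Equiv.Perm (Fin (k + 1))) :
    ∑ g : Fin (k + 1) → Fin n, F (g ∘ π) * ∏ j, x (g j) =
      ∑ g : Fin (k + 1) → Fin n, F g * ∏ j, x (g j) := by
  rw [← Equiv.sum_comp (π.arrowCongr (Equiv.refl (Fin n)))]
  refine sum_congr rfl fun g _ => ?_
  have hg : π.arrowCongr (Equiv.refl (Fin n)) g ∘ π = g := by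
    funext j; simp [Equiv.arrowCongr_apply]
  rw [hg]
  exact congrArg (F g * ·) (Equiv.prod_comp π.symm fun j => x (g j))

theorem tvec_psym : tvec n k (psym n k A) x = tvec n k A x := by
  funext i
  have hcard : (Fintype.card (Equiv.Perm (Fin (k + 1))) : ℝ) = (k + 1).factorial := by
    rw [Fintype.card_perm, Fintype.card_fin]
  simp only [tvec, psym, mul_assoc, ← mul_sum, sum_mul]
  rw [sum_comm]
  simp only [sum_comp_perm_mul_prod, sum_const, card_univ, nsmul_eq_mul, hcard]
  field_simp

theorem tmat_mulVec : tmat n k A x *ᵥ x = tvec n k A x := by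
  funext i
  rw [tvec, ← (Fin.consEquiv fun _ => Fin n).sum_comp, Fintype.sum_prod_type]
  simp only [mulVec, dotProduct, tmat, Fin.consEquiv, Equiv.coe_fn_mk, sum_mul,
    Fin.prod_univ_succ, Fin.cons_zero, Fin.cons_succ]
  exact sum_congr rfl fun j _ => sum_congr rfl fun h _ => by ring

end

theorem psym_tmat_invertible_general (k n : ℕ)
    (A : Fin n → (Fin (k + 1) → Fin n) → ℝ) (hA : IsNsMTensor n k A)
    (x : Fin n → ℝ) (hx : ∀ i, 0 < x i)
    (hAx : ∀ i, 0 < tvec n k A x i) :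
    IsUnit (tmat n k (psym n k A) x) := by
  have hx₀ : 0 ≤ x := fun i => (hx i).le
  refine Matrix.isUnit_of_offDiag_nonpos_of_mulVec_pos
    (fun i j => hA.isZTensor.psym.tmat_nonpos hx₀) hx₀ ?_
  rwa [tmat_mulVec, tvec_psym]

/-- If `A` is a nonsingular M-tensor, `x` is positive, and `A x^{m-1}` is
positive, then the matrix `Â x^{m-2}` is invertible. -/
theorem psym_tmat_invertible (k n : ℕ) (hn : 1 ≤ n)
    (A : Fin n → (Fin (k + 1) → Fin n) → ℝ) (hA : IsNsMTensor n k A)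
    (x : Fin n → ℝ) (hx : ∀ i, 0 < x i)
    (hAx : ∀ i, 0 < tvec n k A x i) :
    IsUnit (tmat n k (psym n k A) x) :=
  psym_tmat_invertible_general k n A hA x hx hAx
end

section
/- Let m ≥ 2 and n ≥ 1. Suppose A ∈ ℝ^{[m,n]} is a nonsingular M-tensor, b ∈ ℝⁿ is a positive vector, τ₀ > 0, and x : ℝ → ℝⁿ is differentiable on [0, 1+τ₀) with x(t) positive and (t A + (1−t) I) x(t)^{m-1} = b for every t ∈ [0, 1+τ₀). Then for every t ∈ [0, 1+τ₀) the derivative x′(t) satisfies the linear system (m−1)·((t Â + (1−t) I) x(t)^{m-2}) x′(t) = −(A − I) x(t)^{m-1}, where Â is the partial symmetrization of A. -/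
/-! Differentiate `(t A + (1 - t) I) x(t)^{m-1} = b` in `t`. The coefficients contribute
`(A - I) x^{m-1}`. The derivative of a monomial `∏ j, x (g j)` is a sum over the `m - 1`
positions of `g` and is invariant under permuting them, so pairing it with `A` is the same as
pairing it with `Â`; for the symmetric `Â` all positions contribute equally, each as the first
one does, which gives `(m - 1) (Â x^{m-2}) x'`. -/

open Finset

section

variable {n k : ℕ}

theorem sum_comp_perm {ι α M : Type*} [Fintype ι] [DecidableEq ι] [Fintype α]
    [AddCommMonoid M] (F : (ι → α) → M) (π : Equiv.Perm ι) :
    ∑ g, F (g ∘ π) = ∑ g, F g :=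
  Equiv.sum_comp (π.symm.arrowCongr (Equiv.refl α)) F

theorem idT_comp_perm (i : Fin n) (g : Fin (k + 1) → Fin n) (π : Equiv.Perm (Fin (k + 1))) :
    idT n k i (g ∘ π) = idT n k i g := by
  simp only [idT, Function.comp_apply, π.forall_congr_right (q := fun j => g j = i)]

theorem psym_comp_perm (A : Fin n → (Fin (k + 1) → Fin n) → ℝ) (i : Fin n)
    (g : Fin (k + 1) → Fin n) (σ : Equiv.Perm (Fin (k + 1))) :
    psym n k A i (g ∘ σ) = psym n k A i g := by
  simp only [psym]
  congr 1
  exact Fintype.sum_equiv (Equiv.mulLeft σ) _ _ fun π => rfl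

theorem sum_psym_mul_of_comp_perm (A : Fin n → (Fin (k + 1) → Fin n) → ℝ) (i : Fin n)
    {F : (Fin (k + 1) → Fin n) → ℝ} (hF : ∀ g (π : Equiv.Perm (Fin (k + 1))), F (g ∘ π) = F g) :
    ∑ g, psym n k A i g * F g = ∑ g, A i g * F g := by
  have hfac : ((k + 1).factorial : ℝ) ≠ 0 := by positivity
  calc ∑ g, psym n k A i g * F g
      = (1 / ((k + 1).factorial : ℝ)) * ∑ π : Equiv.Perm (Fin (k + 1)),
          ∑ g, A i (g ∘ π) * F (g ∘ π) := by
        simp only [psym, mul_sum, sum_mul, hF, mul_assoc]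
        rw [sum_comm]
    _ = ∑ g, A i g * F g := by
        simp only [sum_comp_perm (fun g => A i g * F g), sum_const, card_univ,
          Fintype.card_perm, Fintype.card_fin, nsmul_eq_mul]
        field_simp

theorem psym_homotopy (A : Fin n → (Fin (k + 1) → Fin n) → ℝ) (t : ℝ) :
    psym n k (fun i g => t * A i g + (1 - t) * idT n k i g)
      = fun i g => t * psym n k A i g + (1 - t) * idT n k i g := by
  have hfac : ((k + 1).factorial : ℝ) ≠ 0 := by positivity
  ext i g
  simp only [psym, sum_add_distrib, ← mul_sum, idT_comp_perm, sum_const, card_univ,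
    Fintype.card_perm, Fintype.card_fin, nsmul_eq_mul]
  field_simp

def monomialDeriv (x y : Fin n → ℝ) (g : Fin (k + 1) → Fin n) : ℝ :=
  ∑ j, (∏ l ∈ univ.erase j, x (g l)) * y (g j)

theorem prod_erase_comp_perm {ι M : Type*} [Fintype ι] [DecidableEq ι] [CommMonoid M]
    (f : ι → M) (π : Equiv.Perm ι) (j : ι) :
    ∏ l ∈ univ.erase j, f (π l) = ∏ l ∈ univ.erase (π j), f l :=
  prod_equiv π (by simp) fun _ _ => rfl

theorem prod_erase_zero {M : Type*} [CommMonoid M] (f : Fin (k + 1) → M) :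
    ∏ l ∈ univ.erase 0, f l = ∏ l : Fin k, f l.succ := by
  rw [Fin.univ_succ, erase_cons, prod_map]
  rfl

theorem monomialDeriv_comp_perm (x y : Fin n → ℝ) (g : Fin (k + 1) → Fin n)
    (π : Equiv.Perm (Fin (k + 1))) :
    monomialDeriv x y (g ∘ π) = monomialDeriv x y g := by
  simp only [monomialDeriv, Function.comp_apply, prod_erase_comp_perm (fun l => x (g l))]
  exact Equiv.sum_comp π fun j => (∏ l ∈ univ.erase j, x (g l)) * y (g j)

theorem HasDerivWithinAt.prod_monomial {x : ℝ → Fin n → ℝ} {x' : Fin n → ℝ} {s : Set ℝ}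
    {t : ℝ} (hx : HasDerivWithinAt x x' s t) (g : Fin (k + 1) → Fin n) :
    HasDerivWithinAt (fun u => ∏ j, x u (g j)) (monomialDeriv (x t) x' g) s t := by
  simpa only [monomialDeriv, smul_eq_mul] using
    HasDerivWithinAt.fun_finsetProd (u := univ) fun j _ => hasDerivWithinAt_pi.1 hx (g j)

theorem sum_mul_monomialDeriv_of_comp_perm {C : (Fin (k + 1) → Fin n) → ℝ}
    (hC : ∀ g (π : Equiv.Perm (Fin (k + 1))), C (g ∘ π) = C g) (x y : Fin n → ℝ) :
    ∑ g, C g * monomialDeriv x y g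
      = (k + 1) * ∑ p, (∑ h : Fin k → Fin n, C (Fin.cons p h) * ∏ l, x (h l)) * y p := by
  calc ∑ g, C g * monomialDeriv x y g
      = ∑ j, ∑ g, C g * ((∏ l ∈ univ.erase j, x (g l)) * y (g j)) := by
        simp only [monomialDeriv, mul_sum]
        exact sum_comm
    _ = ∑ _j : Fin (k + 1), ∑ g, C g * ((∏ l ∈ univ.erase 0, x (g l)) * y (g 0)) := by
        refine sum_congr rfl fun j _ => ?_
        rw [← sum_comp_perm _ (Equiv.swap 0 j)]
        refine sum_congr rfl fun g _ => ?_
        simp only [hC, Function.comp_apply, Equiv.swap_apply_right]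
        rw [prod_erase_comp_perm (fun l => x (g l)), Equiv.swap_apply_right]
    _ = (k + 1) * ∑ p, (∑ h : Fin k → Fin n, C (Fin.cons p h) * ∏ l, x (h l)) * y p := by
        rw [sum_const, card_univ, Fintype.card_fin, nsmul_eq_mul, Nat.cast_succ]
        congr 1
        rw [← (Fin.consEquiv fun _ => Fin n).sum_comp, Fintype.sum_prod_type]
        simp only [prod_erase_zero, sum_mul, mul_assoc]
        rfl

theorem sum_mul_monomialDeriv (C : Fin n → (Fin (k + 1) → Fin n) → ℝ) (x y : Fin n → ℝ)
    (i : Fin n) :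
    ∑ g, C i g * monomialDeriv x y g = ((((k : ℝ) + 1) • tmat n k (psym n k C) x).mulVec y) i := by
  rw [← sum_psym_mul_of_comp_perm C i (monomialDeriv_comp_perm x y),
    sum_mul_monomialDeriv_of_comp_perm (psym_comp_perm C i)]
  simp only [Matrix.mulVec, dotProduct, Matrix.smul_apply, smul_eq_mul, tmat, mul_sum, sum_mul,
    mul_assoc]

theorem HasDerivWithinAt.tvec {C : ℝ → Fin n → (Fin (k + 1) → Fin n) → ℝ}
    {C' : Fin n → (Fin (k + 1) → Fin n) → ℝ} {x : ℝ → Fin n → ℝ} {x' : Fin n → ℝ}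
    {s : Set ℝ} {t : ℝ} (hC : HasDerivWithinAt C C' s t) (hx : HasDerivWithinAt x x' s t) :
    HasDerivWithinAt (fun u => tvec n k (C u) (x u))
      (tvec n k C' (x t) + (((k : ℝ) + 1) • tmat n k (psym n k (C t)) (x t)).mulVec x') s t := by
  refine hasDerivWithinAt_pi.2 fun i => ?_
  have hCig (g : Fin (k + 1) → Fin n) : HasDerivWithinAt (fun u => C u i g) (C' i g) s t :=
    hasDerivWithinAt_pi.1 (hasDerivWithinAt_pi.1 hC i) g
  convert HasDerivWithinAt.fun_sum (u := univ) fun g _ => (hCig g).fun_mul (hx.prod_monomial g)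
    using 1
  · rfl
  · simp only [_root_.tvec, Pi.add_apply, sum_add_distrib, sum_mul_monomialDeriv]

theorem hasDerivAt_homotopy (A : Fin n → (Fin (k + 1) → Fin n) → ℝ) (t : ℝ) :
    HasDerivAt (fun u : ℝ => fun i g => u * A i g + (1 - u) * idT n k i g)
      (fun i g => A i g - idT n k i g) t := by
  refine hasDerivAt_pi.2 fun i => hasDerivAt_pi.2 fun g => ?_
  have h := ((hasDerivAt_id t).const_mul (A i g - idT n k i g)).add_const (idT n k i g)
  rw [mul_one] at h
  convert h using 1
  funext u
  simp only [id]
  ring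

end

theorem homotopy_derivative_equation_general (k n : ℕ)
    (A : Fin n → (Fin (k + 1) → Fin n) → ℝ)
    (b : Fin n → ℝ)
    (τ₀ : ℝ)
    (x x' : ℝ → (Fin n → ℝ))
    (hdiff : ∀ t ∈ Set.Ico (0 : ℝ) (1 + τ₀),
      HasDerivWithinAt x (x' t) (Set.Ico (0 : ℝ) (1 + τ₀)) t)
    (hx : ∀ t ∈ Set.Ico (0 : ℝ) (1 + τ₀), (∀ i, 0 < x t i) ∧
      tvec n k (fun i g => t * A i g + (1 - t) * idT n k i g) (x t) = b) :
    ∀ t ∈ Set.Ico (0 : ℝ) (1 + τ₀),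
      (((k : ℝ) + 1) •
          tmat n k (fun i g => t * psym n k A i g + (1 - t) * idT n k i g) (x t)).mulVec
          (x' t)
        = -(tvec n k (fun i g => A i g - idT n k i g) (x t)) := by
  intro t ht
  have hpath := (hasDerivAt_homotopy A t).hasDerivWithinAt.tvec (hdiff t ht)
  have hconst : HasDerivWithinAt
      (fun u => tvec n k (fun i g => u * A i g + (1 - u) * idT n k i g) (x u)) 0
      (Set.Ico 0 (1 + τ₀)) t :=
    (hasDerivWithinAt_const t _ b).congr (fun u hu => (hx u hu).2) (hx t ht).2
  rw [← psym_homotopy]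
  exact eq_neg_of_add_eq_zero_right ((uniqueDiffOn_Ico 0 (1 + τ₀) t ht).eq_deriv _ hpath hconst)

/-- If `x(t)` is a differentiable path of positive solutions of the homotopy on
`[0, 1 + τ₀)`, its derivative `x'(t)` satisfies
`(m-1) ((t Â + (1-t) I) x(t)^{m-2}) x'(t) = -(A - I) x(t)^{m-1}`. -/
theorem homotopy_derivative_equation (k n : ℕ) (hn : 1 ≤ n)
    (A : Fin n → (Fin (k + 1) → Fin n) → ℝ) (hA : IsNsMTensor n k A)
    (b : Fin n → ℝ) (hb : ∀ i, 0 < b i)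
    (τ₀ : ℝ) (hτ : 0 < τ₀)
    (x x' : ℝ → (Fin n → ℝ))
    (hdiff : ∀ t ∈ Set.Ico (0 : ℝ) (1 + τ₀),
      HasDerivWithinAt x (x' t) (Set.Ico (0 : ℝ) (1 + τ₀)) t)
    (hx : ∀ t ∈ Set.Ico (0 : ℝ) (1 + τ₀), (∀ i, 0 < x t i) ∧
      tvec n k (fun i g => t * A i g + (1 - t) * idT n k i g) (x t) = b) :
    ∀ t ∈ Set.Ico (0 : ℝ) (1 + τ₀),
      (((k : ℝ) + 1) •
          tmat n k (fun i g => t * psym n k A i g + (1 - t) * idT n k i g) (x t)).mulVec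
          (x' t)
        = -(tvec n k (fun i g => A i g - idT n k i g) (x t)) :=
  homotopy_derivative_equation_general k n A b τ₀ x x' hdiff hx
end
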